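/- Let n ≥ 2, Ω ⊆ ℝⁿ open, f : Ω → ℝ smooth, and let Γ be the Christoffel symbols of the conformally Euclidean metric g_{ij} = e^{−2f} δ_{ij}. Let I ⊆ ℝ be an interval containing 0, γ : I → Ω a C¹ curve, and F : I → M_n(ℝ) a C¹ matrix-valued function with F(0) invertible, satisfying the parallel transport equation (d/dr) F^l_j(r) + Σ_{k,m} (dγ^k/dr)(r) Γ^l_{km}(γ(r)) F^m_j(r) = 0. Then F(r) is invertible for every r ∈ I, and for all r ∈ I: f(γ(r)) = (1/n) log ( e^{n f(γ(0))} |det F(r)| / |det F(0)| ); equivalently, with v = e^f, v(γ(r)) = v(γ(0)) ( |det F(r)| / |det F(0)| )^{1/n}. -/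

import Mathlib

noncomputable section

open Matrix

/-- Partial derivative `∂_k h` at `x`. -/
def pd {n : ℕ} (h : (Fin n → ℝ) → ℝ) (k : Fin n) (x : Fin n → ℝ) : ℝ :=
  fderiv ℝ h x (Pi.single k 1)

/-- The conformally Euclidean metric `g_{ij} = e^{−2f} δ_{ij}`. -/
def confMetric {n : ℕ} (f : (Fin n → ℝ) → ℝ) (i j : Fin n) (x : Fin n → ℝ) : ℝ :=
  Real.exp (-2 * f x) * (if i = j then 1 else 0)

/-- Its inverse `g^{ij} = e^{2f} δ^{ij}`. -/
def confMetricInv {n : ℕ} (f : (Fin n → ℝ) → ℝ) (i j : Fin n) (x : Fin n → ℝ) : ℝ :=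
  Real.exp (2 * f x) * (if i = j then 1 else 0)

/-- Christoffel symbols `Γ^i_{kl} = (1/2) Σ_p g^{pi} (∂_l g_{kp} + ∂_k g_{lp} − ∂_p g_{kl})`. -/
def christoffel {n : ℕ} (f : (Fin n → ℝ) → ℝ) (i k l : Fin n) (x : Fin n → ℝ) : ℝ :=
  (1 / 2) * ∑ p, confMetricInv f p i x *
    (pd (confMetric f k p) l x + pd (confMetric f l p) k x - pd (confMetric f k l) p x)

private lemma pd_confMetric {n : ℕ} {f : (Fin n → ℝ) → ℝ} {x : Fin n → ℝ}
    (hfd : DifferentiableAt ℝ f x) (k p l : Fin n) :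
    pd (confMetric f k p) l x
      = Real.exp (-2 * f x) * (-2 * pd f l x) * (if k = p then 1 else 0) := by
  by_cases h : k = p
  · subst h
    have hfun : confMetric f k k = fun y => Real.exp (-2 * f y) := by
      funext y; simp [confMetric]
    have h1 : HasFDerivAt (fun y => -2 * f y) ((-2 : ℝ) • fderiv ℝ f x) x :=
      hfd.hasFDerivAt.const_mul (-2)
    have h2 : HasFDerivAt (fun y => Real.exp (-2 * f y))
        (Real.exp (-2 * f x) • ((-2 : ℝ) • fderiv ℝ f x)) x := h1.exp
    rw [if_pos rfl, mul_one]
    unfold pd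
    rw [hfun, h2.fderiv]
    simp [smul_smul]
    ring
  · have hfun : confMetric f k p = fun _ => (0 : ℝ) := by
      funext y; simp [confMetric, h]
    rw [if_neg h, mul_zero]
    unfold pd
    rw [hfun]
    simp

private lemma christoffel_eq {n : ℕ} {f : (Fin n → ℝ) → ℝ} {x : Fin n → ℝ}
    (hfd : DifferentiableAt ℝ f x) (i k l : Fin n) :
    christoffel f i k l x =
      (if k = l then pd f i x else 0) - (if k = i then pd f l x else 0)
        - (if l = i then pd f k x else 0) := by
  have hE : Real.exp (2 * f x) * Real.exp (-2 * f x) = 1 := by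
    rw [← Real.exp_add]; norm_num
  unfold christoffel confMetricInv
  rw [Finset.sum_eq_single i (fun p _ hp => by simp [hp]) (by simp)]
  rw [pd_confMetric hfd, pd_confMetric hfd, pd_confMetric hfd]
  rw [if_pos rfl, mul_one]
  rw [show (if k = l then pd f i x else 0)
      = pd f i x * (if k = l then (1:ℝ) else 0) from by split_ifs <;> ring]
  rw [show (if k = i then pd f l x else 0)
      = pd f l x * (if k = i then (1:ℝ) else 0) from by split_ifs <;> ring]
  rw [show (if l = i then pd f k x else 0)
      = pd f k x * (if l = i then (1:ℝ) else 0) from by split_ifs <;> ring]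
  linear_combination (pd f i x * (if k = l then (1:ℝ) else 0)
    - pd f l x * (if k = i then (1:ℝ) else 0)
    - pd f k x * (if l = i then (1:ℝ) else 0)) * hE

private lemma hasDerivWithinAt_det {n : ℕ} {F : ℝ → Matrix (Fin n) (Fin n) ℝ}
    {B : Matrix (Fin n) (Fin n) ℝ} {s : Set ℝ} {r : ℝ}
    (h : ∀ l j, HasDerivWithinAt (fun ρ => F ρ l j) (B l j) s r) :
    HasDerivWithinAt (fun ρ => (F ρ).det)
      (∑ i, Matrix.cramer (F r) (fun l => B l i) i) s r := by
  classical
  have key : ∀ σ : Equiv.Perm (Fin n), HasDerivWithinAt (fun ρ => ∏ i, F ρ (σ i) i)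
      (∑ i, (∏ j ∈ Finset.univ.erase i, F r (σ j) j) * B (σ i) i) s r := by
    intro σ
    have := HasDerivWithinAt.fun_finsetProd (u := Finset.univ)
      (f := fun i ρ => F ρ (σ i) i) (f' := fun i => B (σ i) i) (x := r) (s := s)
      (fun i _ => h (σ i) i)
    simpa [smul_eq_mul] using this
  have main : HasDerivWithinAt
      (fun ρ => ∑ σ : Equiv.Perm (Fin n),
        ((Equiv.Perm.sign σ : ℤ) : ℝ) * ∏ i, F ρ (σ i) i)
      (∑ σ : Equiv.Perm (Fin n), ((Equiv.Perm.sign σ : ℤ) : ℝ) *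
        ∑ i, (∏ j ∈ Finset.univ.erase i, F r (σ j) j) * B (σ i) i) s r :=
    HasDerivWithinAt.fun_sum (fun σ _ => (key σ).const_mul _)
  have e1 : (fun ρ => (F ρ).det) = fun ρ => ∑ σ : Equiv.Perm (Fin n),
      ((Equiv.Perm.sign σ : ℤ) : ℝ) * ∏ i, F ρ (σ i) i := by
    funext ρ; rw [Matrix.det_apply']
  rw [e1]
  convert main using 1
  have e2 : ∀ i : Fin n, Matrix.cramer (F r) (fun l => B l i) i
      = ∑ σ : Equiv.Perm (Fin n), ((Equiv.Perm.sign σ : ℤ) : ℝ) *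
          ((∏ j ∈ Finset.univ.erase i, F r (σ j) j) * B (σ i) i) := by
    intro i
    rw [Matrix.cramer_apply, Matrix.det_apply']
    refine Finset.sum_congr rfl fun σ _ => ?_
    congr 1
    rw [← Finset.mul_prod_erase Finset.univ _ (Finset.mem_univ i)]
    rw [Matrix.updateCol_apply, if_pos rfl, mul_comm]
    congr 1
    refine Finset.prod_congr rfl fun j hj => ?_
    rw [Matrix.updateCol_apply, if_neg (Finset.mem_erase.mp hj).1]
  calc (∑ i, Matrix.cramer (F r) (fun l => B l i) i)
      = ∑ i, ∑ σ : Equiv.Perm (Fin n), ((Equiv.Perm.sign σ : ℤ) : ℝ) *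
          ((∏ j ∈ Finset.univ.erase i, F r (σ j) j) * B (σ i) i) :=
        Finset.sum_congr rfl fun i _ => e2 i
    _ = ∑ σ : Equiv.Perm (Fin n), ∑ i, ((Equiv.Perm.sign σ : ℤ) : ℝ) *
          ((∏ j ∈ Finset.univ.erase i, F r (σ j) j) * B (σ i) i) := Finset.sum_comm
    _ = _ := by simp [Finset.mul_sum]

private lemma sum_cramer_mul {n : ℕ} (A M : Matrix (Fin n) (Fin n) ℝ) :
    ∑ i, Matrix.cramer M (fun l => (A * M) l i) i = Matrix.trace A * M.det := by
  have h1 : ∀ i : Fin n, Matrix.cramer M (fun l => (A * M) l i) i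
      = (M.adjugate * (A * M)) i i := by
    intro i
    rw [Matrix.cramer_eq_adjugate_mulVec]
    simp [Matrix.mulVec, Matrix.mul_apply, dotProduct]
  simp_rw [h1]
  have h2 : ∑ i, (M.adjugate * (A * M)) i i = Matrix.trace (M.adjugate * (A * M)) := rfl
  rw [h2, Matrix.trace_mul_comm, mul_assoc, Matrix.mul_adjugate, Matrix.mul_smul,
    Matrix.mul_one, Matrix.trace_smul]
  simp [mul_comm]

/-- If `F` solves the parallel transport equation along a `C¹` curve `γ` in an
open set `Ω ⊆ ℝⁿ` (with `Γ` the Christoffel symbols of `g_{ij} = e^{−2f} δ_{ij}`, `f`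
smooth), `0 ∈ I` and `F(0)` is invertible, then `F(r)` is invertible for every `r ∈ I` and
`f(γ(r)) = (1/n) log (e^{n f(γ(0))} |det F(r)| / |det F(0)|)`; equivalently, with `v = e^f`,
`v(γ(r)) = v(γ(0)) (|det F(r)| / |det F(0)|)^{1/n}`. -/
theorem stmt11 {n : ℕ} (hn : 2 ≤ n) (Ω : Set (Fin n → ℝ)) (hΩ : IsOpen Ω)
    (f : (Fin n → ℝ) → ℝ) (hf : ContDiffOn ℝ (⊤ : ℕ∞) f Ω)
    (I : Set ℝ) (hI : I.OrdConnected) (h0 : (0 : ℝ) ∈ I)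
    (γ γ' : ℝ → Fin n → ℝ)
    (F : ℝ → Matrix (Fin n) (Fin n) ℝ)
    (hmem : ∀ r ∈ I, γ r ∈ Ω)
    (hγ : ∀ r ∈ I, ∀ k, HasDerivWithinAt (fun ρ => γ ρ k) (γ' r k) I r)
    (hF : ∀ r ∈ I, ∀ l j, HasDerivWithinAt (fun ρ => F ρ l j)
      (-(∑ k, ∑ m, γ' r k * christoffel f l k m (γ r) * F r m j)) I r)
    (hF0 : IsUnit (F 0).det) :
    ∀ r ∈ I, IsUnit (F r).det ∧
      f (γ r) = (1 / (n : ℝ)) *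
        Real.log (Real.exp ((n : ℝ) * f (γ 0)) * |(F r).det| / |(F 0).det|) ∧
      Real.exp (f (γ r)) =
        Real.exp (f (γ 0)) * (|(F r).det| / |(F 0).det|) ^ ((1 : ℝ) / n) := by
  classical
  have hn0 : (n : ℝ) ≠ 0 := Nat.cast_ne_zero.mpr (by omega)
  set c : ℝ → ℝ := fun r => ∑ k, γ' r k * pd f k (γ r) with hc
  have hdiff : ∀ r ∈ I, DifferentiableAt ℝ f (γ r) := fun r hr =>
    (hf.contDiffAt (hΩ.mem_nhds (hmem r hr))).differentiableAt (by simp)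
  have hcomp : ∀ r ∈ I, HasDerivWithinAt (fun ρ => f (γ ρ)) (c r) I r := by
    intro r hr
    have hγv : HasDerivWithinAt γ (γ' r) I r := hasDerivWithinAt_pi.mpr (hγ r hr)
    have h1 : HasDerivWithinAt (fun ρ => f (γ ρ)) (fderiv ℝ f (γ r) (γ' r)) I r :=
      ((hdiff r hr).hasFDerivAt).comp_hasDerivWithinAt r hγv
    convert h1 using 1
    have hsum : γ' r = ∑ k, γ' r k • (Pi.single k 1 : Fin n → ℝ) := by
      funext m
      simp [Finset.sum_apply, Pi.single_apply]
    conv_rhs => rw [hsum]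
    rw [map_sum]
    simp [pd, hc]
  have hdet : ∀ r ∈ I, HasDerivWithinAt (fun ρ => (F ρ).det)
      ((n : ℝ) * c r * (F r).det) I r := by
    intro r hr
    set A : Matrix (Fin n) (Fin n) ℝ :=
      Matrix.of fun l m => -(∑ k, γ' r k * christoffel f l k m (γ r)) with hA
    have hBA : ∀ l j, -(∑ k, ∑ m, γ' r k * christoffel f l k m (γ r) * F r m j)
        = (A * F r) l j := by
      intro l j
      simp only [hA, Matrix.mul_apply, Matrix.of_apply, neg_mul, Finset.sum_mul,
        Finset.sum_neg_distrib, mul_assoc]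
      rw [Finset.sum_comm]
    have hder := hasDerivWithinAt_det (F := F) (B := A * F r) (s := I) (r := r)
      (fun l j => (hBA l j) ▸ hF r hr l j)
    have htr : Matrix.trace A = (n : ℝ) * c r := by
      have hAd : ∀ l : Fin n, A l l = c r := by
        intro l
        simp only [hA, Matrix.of_apply, hc]
        rw [← Finset.sum_neg_distrib]
        refine Finset.sum_congr rfl fun k _ => ?_
        rw [christoffel_eq (hdiff r hr) l k l]
        simp
      simp [Matrix.trace, Matrix.diag, hAd, Finset.sum_const, Finset.card_univ,
        nsmul_eq_mul]
    have hval : ∑ i, Matrix.cramer (F r) (fun l => (A * F r) l i) i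
        = (n : ℝ) * c r * (F r).det := by
      rw [sum_cramer_mul, htr]
    exact hval ▸ hder
  set φ : ℝ → ℝ := fun ρ => (F ρ).det * Real.exp (-(n : ℝ) * f (γ ρ)) with hφdef
  have hφ : ∀ r ∈ I, HasDerivWithinAt φ 0 I r := by
    intro r hr
    have hE : HasDerivWithinAt (fun ρ => Real.exp (-(n : ℝ) * f (γ ρ)))
        (Real.exp (-(n : ℝ) * f (γ r)) * (-(n : ℝ) * c r)) I r :=
      ((hcomp r hr).const_mul (-(n : ℝ))).exp
    have hm : HasDerivWithinAt φ ((n : ℝ) * c r * (F r).det * Real.exp (-(n : ℝ) * f (γ r))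
        + (F r).det * (Real.exp (-(n : ℝ) * f (γ r)) * (-(n : ℝ) * c r))) I r := (hdet r hr).mul hE
    convert hm using 1
    ring
  have hconv : Convex ℝ I := hI.convex
  have hconst : ∀ r ∈ I, φ r = φ 0 := by
    intro r hr
    have hb := hconv.norm_image_sub_le_of_norm_hasDerivWithin_le
      (C := 0) (f' := fun _ => (0 : ℝ)) (fun ρ hρ => hφ ρ hρ) (fun ρ _ => by simp) h0 hr
    rw [zero_mul] at hb
    have : φ r - φ 0 = 0 := by
      exact norm_eq_zero.mp (le_antisymm hb (norm_nonneg _))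
    linarith [this]
  intro r hr
  have hkey : (F r).det * Real.exp (-(n : ℝ) * f (γ r))
      = (F 0).det * Real.exp (-(n : ℝ) * f (γ 0)) := hconst r hr
  set a := f (γ r) with ha
  set b := f (γ 0) with hb
  have hmul : Real.exp (-(n : ℝ) * a) * Real.exp ((n : ℝ) * a) = 1 := by
    rw [← Real.exp_add]; ring_nf; exact Real.exp_zero
  have hmul2 : Real.exp (-(n : ℝ) * b) * Real.exp ((n : ℝ) * a)
      = Real.exp ((n : ℝ) * a - (n : ℝ) * b) := by
    rw [← Real.exp_add]; congr 1; ring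
  have hDr : (F r).det = (F 0).det * Real.exp ((n : ℝ) * a - (n : ℝ) * b) := by
    calc (F r).det = (F r).det * (Real.exp (-(n : ℝ) * a) * Real.exp ((n : ℝ) * a)) := by
          rw [hmul, mul_one]
      _ = (F r).det * Real.exp (-(n : ℝ) * a) * Real.exp ((n : ℝ) * a) := by ring
      _ = (F 0).det * Real.exp (-(n : ℝ) * b) * Real.exp ((n : ℝ) * a) := by rw [hkey]
      _ = (F 0).det * Real.exp ((n : ℝ) * a - (n : ℝ) * b) := by rw [mul_assoc, hmul2]
  have hD0 : (F 0).det ≠ 0 := hF0.ne_zero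
  have hDrne : (F r).det ≠ 0 := by
    rw [hDr]; exact mul_ne_zero hD0 (Real.exp_ne_zero _)
  have hD0abs : |(F 0).det| ≠ 0 := abs_ne_zero.mpr hD0
  have hratio : |(F r).det| / |(F 0).det| = Real.exp ((n : ℝ) * a - (n : ℝ) * b) := by
    rw [hDr, abs_mul, abs_of_pos (Real.exp_pos _), mul_comm, mul_div_assoc,
      div_self hD0abs, mul_one]
  refine ⟨isUnit_iff_ne_zero.mpr hDrne, ?_, ?_⟩
  · have h1 : Real.exp ((n : ℝ) * b) * |(F r).det| / |(F 0).det| = Real.exp ((n : ℝ) * a) := by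
      rw [mul_div_assoc, hratio, ← Real.exp_add]
      congr 1; ring
    rw [h1, Real.log_exp]
    field_simp
  · rw [hratio, ← Real.exp_mul, ← Real.exp_add]
    congr 1
    field_simp
    ring
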